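/- arXiv:2106.11120 — 4 statements merged into one kernel-verified Lean document; each statement's English description precedes it below -/
import Mathlib

section
/- The function D_i(q) := ((d − q)/(d − 2q)) C_i(q) − ∫₀^q d/(d − 2x)² C_i(x) dx is strictly convex on [0, d/2) when C_i is convex, continuously differentiable, and strictly increasing with C_i(0) = 0. -/
/-!
Writing `w q = (d - q) / (d - 2 q)`, the integrand `d / (d - 2 x) ^ 2` is `w'`, so by the
fundamental theorem of calculus the integral cancels the `w' C` term of `(w C)'` and
`D' = w C'`. On `(0, d / 2)` the weight `w` is positive and strictly increasing, while `C'` is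
nondecreasing (convexity) and positive (convexity plus strict monotonicity), so `D'` is strictly
increasing and `D` is strictly convex.
-/

open Set intervalIntegral

noncomputable def costWeight (d q : ℝ) : ℝ := (d - q) / (d - 2 * q)

lemma ConvexOn.deriv_pos_of_strictMono {C : ℝ → ℝ} (hconv : ConvexOn ℝ univ C)
    (hmono : StrictMono C) {x : ℝ} (hx : DifferentiableAt ℝ C x) : 0 < deriv C x :=
  ((hmono.strictMonoOn univ).slope_pos trivial trivial (sub_one_lt x).ne).trans_le
    (hconv.slope_le_deriv trivial trivial (sub_one_lt x) hx)

theorem hasDerivAt_mul_sub_integral_deriv_mul {g g' C : ℝ → ℝ} {s : Set ℝ} {a q : ℝ}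
    (hs : IsOpen s) (has : uIcc a q ⊆ s) (hg : ∀ x ∈ s, HasDerivAt g (g' x) x)
    (hg' : ContinuousOn g' s) (hC : ∀ x ∈ s, DifferentiableAt ℝ C x) :
    HasDerivAt (fun u => g u * C u - ∫ x in a..u, g' x * C x) (g q * deriv C q) q := by
  have hq : q ∈ s := has right_mem_uIcc
  have hcont : ContinuousOn (fun x => g' x * C x) s :=
    hg'.mul fun x hx => (hC x hx).continuousAt.continuousWithinAt
  have hint : HasDerivAt (fun u => ∫ x in a..u, g' x * C x) (g' q * C q) q :=
    integral_hasDerivAt_right ((hcont.mono has).intervalIntegrable)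
      (hcont.stronglyMeasurableAtFilter hs q hq) (hcont.continuousAt (hs.mem_nhds hq))
  exact (((hg q hq).mul (hC q hq).hasDerivAt).sub hint).congr_deriv (by ring)

lemma hasDerivAt_costWeight {d q : ℝ} (hq : d - 2 * q ≠ 0) :
    HasDerivAt (costWeight d) (d / (d - 2 * q) ^ 2) q := by
  have hnum : HasDerivAt (fun x => d - x) (-1) q := by
    simpa using (hasDerivAt_id q).const_sub d
  have hden : HasDerivAt (fun x => d - 2 * x) (-2) q := by
    simpa using ((hasDerivAt_id q).const_mul 2).const_sub d
  exact (hnum.div hden hq).congr_deriv (by ring)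

lemma continuousOn_deriv_costWeight (d : ℝ) :
    ContinuousOn (fun x => d / (d - 2 * x) ^ 2) (Iio (d / 2)) :=
  continuousOn_const.div (by fun_prop) fun x hx =>
    pow_ne_zero 2 (by linarith [mem_Iio.mp hx])

lemma costWeight_pos {d q : ℝ} (hd : 0 < d) (hq : q < d / 2) : 0 < costWeight d q :=
  div_pos (by linarith) (by linarith)

lemma strictMonoOn_costWeight {d : ℝ} (hd : 0 < d) :
    StrictMonoOn (costWeight d) (Iio (d / 2)) := by
  intro x hx y hy hxy
  rw [mem_Iio] at hx hy
  rw [costWeight, costWeight, div_lt_div_iff₀ (by linarith) (by linarith)]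
  nlinarith

theorem constructed_cost_strictly_convex_general (d : ℝ) (hd : 0 < d) (C : ℝ → ℝ)
    (hC : ContDiff ℝ 1 C) (hconv : ConvexOn ℝ Set.univ C)
    (hmono : StrictMono C)
    (D : ℝ → ℝ)
    (hD : ∀ q, D q = (d - q) / (d - 2 * q) * C q
      - ∫ x in (0 : ℝ)..q, d / (d - 2 * x) ^ 2 * C x) :
    StrictConvexOn ℝ (Set.Ico (0 : ℝ) (d / 2)) D := by
  have hCd : Differentiable ℝ C := hC.differentiable one_ne_zero
  have hderiv : ∀ q ∈ Iio (d / 2), HasDerivAt D (costWeight d q * deriv C q) q := by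
    intro q hq
    rw [funext hD]
    exact hasDerivAt_mul_sub_integral_deriv_mul isOpen_Iio
      (ordConnected_Iio.uIcc_subset (by simpa using hd) hq)
      (fun x hx => hasDerivAt_costWeight (by linarith [mem_Iio.mp hx]))
      (continuousOn_deriv_costWeight d) fun x _ => hCd x
  refine StrictMonoOn.strictConvexOn_of_deriv (convex_Ico _ _)
    (fun x hx => (hderiv x hx.2).continuousAt.continuousWithinAt) ?_
  rw [interior_Ico]
  refine StrictMonoOn.congr ?_ fun q hq => ((hderiv q hq.2).deriv).symm
  intro x hx y hy hxy
  exact mul_lt_mul (strictMonoOn_costWeight hd hx.2 hy.2 hxy)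
    (hconv.monotoneOn_deriv (fun z _ => hCd z) trivial trivial hxy.le)
    (hconv.deriv_pos_of_strictMono hmono (hCd x)) (costWeight_pos hd hy.2).le

/-- D_i(q) := ((d−q)/(d−2q)) C_i(q) − ∫₀^q d/(d−2x)² C_i(x) dx is
strictly convex on [0, d/2) when C_i is convex, C¹, strictly increasing, C_i(0)=0. -/
theorem constructed_cost_strictly_convex (d : ℝ) (hd : 0 < d) (C : ℝ → ℝ)
    (hC : ContDiff ℝ 1 C) (hconv : ConvexOn ℝ Set.univ C)
    (hmono : StrictMono C) (h0 : C 0 = 0)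
    (D : ℝ → ℝ)
    (hD : ∀ q, D q = (d - q) / (d - 2 * q) * C q
      - ∫ x in (0 : ℝ)..q, d / (d - 2 * x) ^ 2 * C x) :
    StrictConvexOn ℝ (Set.Ico (0 : ℝ) (d / 2)) D :=
  constructed_cost_strictly_convex_general d hd C hC hconv hmono D hD
end

section
/- With the efficiency recovery mechanism, the modified profit of firm i as a function of b_i (with Σ_{j≠i} b_j = s > 0 fixed) is π_i†(b_i) = d² b_i/(s + b_i)² − C_i(d b_i/(s + b_i)) + d² b_i²/(2(s + b_i)² s) − φ d²/(2s), and its derivative with respect to b_i equals (d²/(s + b_i)²) · ( s/(s + b_i) − (s/d) · C_i'(d b_i/(s + b_i)) ). -/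
/-!
Everything is a function of firm `i`'s market share `q = b / (s + b)`: since `1 - q = s / (s + b)`,
the revenue is `d² b / (s + b)² = (d² / s) q (1 - q)` and the bonus is `(d² / (2 s)) q²`, so
`π = (d² / s)(q - q² / 2) - C(d q) - φ d² / (2 s)`. Its `q`-derivative is `(d² / s)(1 - q) - d C'(d q)`,
and the chain rule with `dq/db = s / (s + b)²` gives the claimed formula.
-/

noncomputable section

def share (s b : ℝ) : ℝ := b / (s + b)

theorem one_sub_share {s b : ℝ} (h : s + b ≠ 0) : 1 - share s b = s / (s + b) := by
  unfold share
  field_simp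
  ring

theorem hasDerivAt_share {s b : ℝ} (h : s + b ≠ 0) :
    HasDerivAt (share s) (s / (s + b) ^ 2) b := by
  refine ((hasDerivAt_id b).fun_div ((hasDerivAt_id b).const_add s) h).congr_deriv ?_
  simp

def profitOfShare (d s φ : ℝ) (C : ℝ → ℝ) (q : ℝ) : ℝ :=
  d ^ 2 / s * (q - q ^ 2 / 2) - C (d * q) - φ * d ^ 2 / (2 * s)

theorem hasDerivAt_profitOfShare {d q : ℝ} (s φ : ℝ) {C : ℝ → ℝ}
    (hC : DifferentiableAt ℝ C (d * q)) :
    HasDerivAt (profitOfShare d s φ C) (d ^ 2 / s * (1 - q) - d * deriv C (d * q)) q := by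
  have hquad : HasDerivAt (fun x : ℝ => x - x ^ 2 / 2) (1 - q) q := by
    refine ((hasDerivAt_id q).fun_sub ((hasDerivAt_pow 2 q).div_const 2)).congr_deriv ?_
    simp
  have hcost : HasDerivAt (fun x => C (d * x)) (deriv C (d * q) * d) q :=
    hC.hasDerivAt.comp q ((hasDerivAt_id q).const_mul d |>.congr_deriv (mul_one d))
  refine (((hquad.const_mul (d ^ 2 / s)).sub hcost).sub_const (φ * d ^ 2 / (2 * s))).congr_deriv ?_
  ring

theorem profit_eq_profitOfShare {d s : ℝ} (φ : ℝ) (C : ℝ → ℝ) (hs : s ≠ 0) (b : ℝ) :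
    d ^ 2 * b / (s + b) ^ 2 - C (d * b / (s + b))
      + d ^ 2 * b ^ 2 / (2 * (s + b) ^ 2 * s) - φ * d ^ 2 / (2 * s)
      = profitOfShare d s φ C (share s b) := by
  unfold profitOfShare share
  rw [mul_div_assoc d]
  by_cases hsb : s + b = 0
  · simp [hsb] -- every quotient by `s + b` is `0` here (`x / 0 = 0`)
  · field_simp
    ring

/-- With the mechanism, the modified profit
π_i†(b) = d²b/(s+b)² − C(db/(s+b)) + d²b²/(2(s+b)²s) − φd²/(2s)
has derivative (d²/(s+b)²)·( s/(s+b) − (s/d)·C'(db/(s+b)) ) for b ≥ 0. -/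
theorem modified_profit_deriv (d s φ : ℝ) (hd : 0 < d) (hs : 0 < s)
    (C : ℝ → ℝ) (hC : ContDiff ℝ 1 C)
    (π : ℝ → ℝ)
    (hπ : ∀ b, π b = d ^ 2 * b / (s + b) ^ 2 - C (d * b / (s + b))
      + d ^ 2 * b ^ 2 / (2 * (s + b) ^ 2 * s) - φ * d ^ 2 / (2 * s)) :
    ∀ b : ℝ, 0 ≤ b →
      HasDerivAt π
        (d ^ 2 / (s + b) ^ 2 *
          (s / (s + b) - s / d * deriv C (d * b / (s + b)))) b := by
  intro b hb
  have hsb : s + b ≠ 0 := by positivity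
  have hπ_comp : π = profitOfShare d s φ C ∘ share s :=
    funext fun x => (hπ x).trans (profit_eq_profitOfShare φ C hs.ne' x)
  have hCb : DifferentiableAt ℝ C (d * share s b) := hC.differentiable one_ne_zero _
  rw [hπ_comp]
  refine ((hasDerivAt_profitOfShare s φ hCb).comp b (hasDerivAt_share hsb)).congr_deriv ?_
  rw [one_sub_share hsb, share, mul_div_assoc]
  field_simp
end
end

section
/- Suppose (b_i*, i ∈ N) with p = d/Σ_i b_i* > 0 satisfies, for every i, the variational inequality (p − C_i'(b_i* p))(b_i − b_i*) ≤ 0 for all b_i ≥ 0, and Σ_i b_i* p = d. Then the supplies q_i* = b_i* p form an optimal solution of the social cost minimization problem min Σ_i C_i(q_i) subject to q_i ≥ 0, Σ_i q_i = d. -/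
/-!
The variational inequality, rescaled from bids `b` to supplies `q = b * p`, says that the price
`p` is a Lagrange multiplier for the constraint `∑ i, q i = d` at `q* = b* p`:
`(p - C_i'(q*_i)) (q_i - q*_i) ≤ 0` for every `q_i ≥ 0`. Adding the tangent-line inequalities
`C_i'(q*_i) (q_i - q*_i) ≤ C_i(q_i) - C_i(q*_i)` of the convex costs then gives
`p ∑ (q_i - q*_i) ≤ ∑ C_i(q_i) - ∑ C_i(q*_i)`, and the left side vanishes since both
supply vectors sum to `d`.
-/

open Finset

theorem ConvexOn.deriv_mul_sub_le_sub {S : Set ℝ} {f : ℝ → ℝ} {x y : ℝ}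
    (hfc : ConvexOn ℝ S f) (hx : x ∈ S) (hy : y ∈ S) (hfd : DifferentiableAt ℝ f x) :
    deriv f x * (y - x) ≤ f y - f x := by
  rcases lt_trichotomy x y with hxy | rfl | hyx
  · have h := hfc.deriv_le_slope hx hy hxy hfd
    rwa [slope_def_field, le_div_iff₀ (sub_pos.2 hxy)] at h
  · simp
  · have h := hfc.slope_le_deriv hy hx hyx hfd
    rw [slope_def_field, div_le_iff₀ (sub_pos.2 hyx)] at h
    linarith

theorem sum_le_sum_of_convexOn_of_multiplier {ι : Type*} (s : Finset ι) {f : ι → ℝ → ℝ}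
    {x y : ι → ℝ} (μ : ℝ) (hfc : ∀ i ∈ s, ConvexOn ℝ Set.univ (f i))
    (hfd : ∀ i ∈ s, DifferentiableAt ℝ (f i) (x i))
    (hkkt : ∀ i ∈ s, (μ - deriv (f i) (x i)) * (y i - x i) ≤ 0)
    (hsum : ∑ i ∈ s, y i = ∑ i ∈ s, x i) :
    ∑ i ∈ s, f i (x i) ≤ ∑ i ∈ s, f i (y i) := by
  have hterm : ∀ i ∈ s, μ * (y i - x i) ≤ f i (y i) - f i (x i) := fun i hi => by
    have htangent := (hfc i hi).deriv_mul_sub_le_sub (Set.mem_univ (x i))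
      (Set.mem_univ (y i)) (hfd i hi)
    linarith [hkkt i hi]
  have hmul : ∑ i ∈ s, μ * (y i - x i) = 0 := by
    rw [← mul_sum, sum_sub_distrib, hsum, sub_self, mul_zero]
  have hsum_term := sum_le_sum hterm
  rw [hmul, sum_sub_distrib] at hsum_term
  linarith

theorem mul_sub_mul_nonpos_of_forall_nonneg {c β p q : ℝ} (hp : 0 < p)
    (h : ∀ b : ℝ, 0 ≤ b → c * (b - β) ≤ 0) (hq : 0 ≤ q) :
    c * (q - β * p) ≤ 0 := by
  have hb := h (q / p) (div_nonneg hq hp.le)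
  have hscale : c * (q - β * p) = c * (q / p - β) * p := by
    field_simp
  rw [hscale]
  exact mul_nonpos_of_nonpos_of_nonneg hb hp.le

theorem equilibrium_is_socially_optimal_general {ι : Type*} [Fintype ι]
    (d : ℝ) (C : ι → ℝ → ℝ)
    (hconv : ∀ i, ConvexOn ℝ Set.univ (C i))
    (hdiff : ∀ i, ContDiff ℝ 1 (C i))
    (bstar : ι → ℝ)
    (p : ℝ) (hp : 0 < p)
    (hVI : ∀ i, ∀ b : ℝ, 0 ≤ b →
      (p - deriv (C i) (bstar i * p)) * (b - bstar i) ≤ 0)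
    (hbal : ∑ i, bstar i * p = d) :
    ∀ q : ι → ℝ, (∀ i, 0 ≤ q i) → ∑ i, q i = d →
      ∑ i, C i (bstar i * p) ≤ ∑ i, C i (q i) := by
  intro q hq hqd
  refine sum_le_sum_of_convexOn_of_multiplier univ p (fun i _ => hconv i)
    (fun i _ => ((hdiff i).differentiable one_ne_zero).differentiableAt)
    (fun i _ => mul_sub_mul_nonpos_of_forall_nonneg hp (hVI i) (hq i)) ?_
  rw [hqd, hbal]

/-- If bids b* with p = d/Σ b* > 0 satisfy the variational inequality
(p − C_i'(b_i* p))(b_i − b_i*) ≤ 0 for all b_i ≥ 0 and each i, and Σ b_i* p = d,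
then the supplies q_i* = b_i* p solve the social cost minimization problem. -/
theorem equilibrium_is_socially_optimal {ι : Type*} [Fintype ι]
    (d : ℝ) (hd : 0 < d) (C : ι → ℝ → ℝ)
    (hconv : ∀ i, ConvexOn ℝ Set.univ (C i))
    (hdiff : ∀ i, ContDiff ℝ 1 (C i))
    (hmono : ∀ i, StrictMono (C i)) (h0 : ∀ i, C i 0 = 0)
    (bstar : ι → ℝ) (hb : ∀ i, 0 ≤ bstar i)
    (p : ℝ) (hpdef : p = d / ∑ i, bstar i) (hp : 0 < p)
    (hVI : ∀ i, ∀ b : ℝ, 0 ≤ b →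
      (p - deriv (C i) (bstar i * p)) * (b - bstar i) ≤ 0)
    (hbal : ∑ i, bstar i * p = d) :
    ∀ q : ι → ℝ, (∀ i, 0 ≤ q i) → ∑ i, q i = d →
      ∑ i, C i (bstar i * p) ≤ ∑ i, C i (q i) :=
  equilibrium_is_socially_optimal_general d C hconv hdiff bstar p hp hVI hbal
end

section
/- Setting φ = ( Σ_i (q_i*)²/(d − q_i*) ) / ( d² Σ_i 1/(d − q_i*) ) makes the market self-sufficient at equilibrium: Σ_i Δπ_i = 0, where Δπ_i = ((q_i*)² − φ d²)/(2 Σ_{j≠i} b_j*). -/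
/-!
Since `q_i* = b_i* p` and `Σ_j q_j* = d`, the denominators are `2 Σ_{j≠i} b_j* = 2 (d - q_i*) / p`,
so `Σ_i Δπ_i = (p / 2) Σ_i w_i (q_i*² - φ d²)` with weights `w_i = 1 / (d - q_i*) > 0`.
The prescribed `φ d²` is exactly the `w`-weighted mean of the `q_i*²`, and deviations from a
weighted mean sum to zero.
-/

open Finset

theorem Finset.sum_mul_sub_weighted_mean_eq_zero {ι : Type*} (s : Finset ι) {w : ι → ℝ}
    (hw : ∀ i ∈ s, 0 ≤ w i) (a : ι → ℝ) :
    ∑ i ∈ s, w i * (a i - (∑ j ∈ s, w j * a j) / ∑ j ∈ s, w j) = 0 := by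
  by_cases hW : ∑ j ∈ s, w j = 0
  · have hw0 := (sum_eq_zero_iff_of_nonneg hw).1 hW
    exact sum_eq_zero fun i hi => by rw [hw0 i hi, zero_mul]
  · simp only [mul_sub, sum_sub_distrib, ← sum_mul]
    field_simp
    ring

theorem sum_erase_eq_sub_div {ι : Type*} [Fintype ι] [DecidableEq ι] {b q : ι → ℝ}
    {d p : ℝ} (hp : p ≠ 0) (hq : ∀ i, q i = b i * p) (hsum : ∑ i, q i = d) (i : ι) :
    ∑ j ∈ univ.erase i, b j = (d - q i) / p := by
  rw [eq_div_iff hp, sum_mul, ← hsum, ← sum_erase_add _ _ (mem_univ i)]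
  simp only [hq, add_sub_cancel_right]

theorem self_sufficiency_general {ι : Type*} [Fintype ι] [DecidableEq ι]
    (d : ℝ) (hd : 0 < d) (bstar : ι → ℝ)
    (p : ℝ) (hp : 0 < p)
    (qstar : ι → ℝ) (hq : ∀ i, qstar i = bstar i * p)
    (hbal : ∑ i, qstar i = d) (hqd : ∀ i, qstar i < d)
    (φ : ℝ)
    (hφ : φ = (∑ i, (qstar i) ^ 2 / (d - qstar i))
      / (d ^ 2 * ∑ i, 1 / (d - qstar i))) :
    ∑ i, ((qstar i) ^ 2 - φ * d ^ 2)
      / (2 * ∑ j ∈ Finset.univ.erase i, bstar j) = 0 := by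
  set w : ι → ℝ := fun i => 1 / (d - qstar i)
  have hgap : ∀ i, d - qstar i ≠ 0 := fun i => (sub_pos.2 (hqd i)).ne'
  have hmean : φ * d ^ 2 = (∑ i, w i * qstar i ^ 2) / ∑ i, w i := by
    simp only [hφ, w, one_div_mul_eq_div]
    field_simp
  have hterm : ∀ i, (qstar i ^ 2 - φ * d ^ 2) / (2 * ∑ j ∈ univ.erase i, bstar j)
      = p / 2 * (w i * (qstar i ^ 2 - φ * d ^ 2)) := fun i => by
    rw [sum_erase_eq_sub_div hp.ne' hq hbal]
    simp only [w]
    field_simp [hgap i]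
  rw [sum_congr rfl fun i _ => hterm i, ← mul_sum, hmean,
    sum_mul_sub_weighted_mean_eq_zero _ (fun i _ => (one_div_pos.2 (sub_pos.2 (hqd i))).le),
    mul_zero]

/-- Setting φ = (Σ_i q_i*²/(d−q_i*)) / (d² Σ_i 1/(d−q_i*)) makes the
market self-sufficient: Σ_i Δπ_i = 0. -/
theorem self_sufficiency {ι : Type*} [Fintype ι] [DecidableEq ι] [Nonempty ι]
    (d : ℝ) (hd : 0 < d) (bstar : ι → ℝ) (hb : ∀ i, 0 ≤ bstar i)
    (p : ℝ) (hpdef : p = d / ∑ j, bstar j) (hp : 0 < p)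
    (qstar : ι → ℝ) (hq : ∀ i, qstar i = bstar i * p)
    (hbal : ∑ i, qstar i = d) (hqd : ∀ i, qstar i < d)
    (hs : ∀ i, 0 < ∑ j ∈ Finset.univ.erase i, bstar j)
    (φ : ℝ)
    (hφ : φ = (∑ i, (qstar i) ^ 2 / (d - qstar i))
      / (d ^ 2 * ∑ i, 1 / (d - qstar i))) :
    ∑ i, ((qstar i) ^ 2 - φ * d ^ 2)
      / (2 * ∑ j ∈ Finset.univ.erase i, bstar j) = 0 :=
  self_sufficiency_general d hd bstar p hp qstar hq hbal hqd φ hφ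
end
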